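/- arXiv:2005.12003 — 8 statements merged into one kernel-verified Lean document; each statement's English description precedes it below -/
import Mathlib

section
/- Let N be a normal subgroup of a finite group G, with |N| = k and |G/N| = k̄. Suppose both N and G/N belong to the class F of finite groups factorizable into two subsets for every factorization of their order. Then G belongs to F: for every factorization |G| = a·b there are subsets A, B ⊆ G with |A| = a, |B| = b and G = AB. -/
def IsFactorization {G : Type*} [Group G] (A B : Finset G) : Prop :=
  ∀ g : G, ∃! p : G × G, p.1 ∈ A ∧ p.2 ∈ B ∧ p.1 * p.2 = g

/-- `G` is in the class `𝓕`: it factorizes into two subsets for every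
factorization of its order. -/
def InF (G : Type*) [Group G] : Prop :=
  ∀ a b : ℕ, a * b = Nat.card G →
    ∃ A B : Finset G, A.card = a ∧ B.card = b ∧ IsFactorization A B

theorem inF_of_normal {G : Type*} [Group G] [Fintype G] (N : Subgroup G)
    [N.Normal] (hN : InF N) (hQ : InF (G ⧸ N)) : InF G := by
  classical
  intro a b hab
  have hcard : Nat.card G = Nat.card (G ⧸ N) * Nat.card N :=
    Subgroup.card_eq_card_quotient_mul_card_subgroup N
  have hkpos : 0 < Nat.card N := Nat.card_pos
  have hqpos : 0 < Nat.card (G ⧸ N) := Nat.card_pos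
  -- split a = a₂ * a₁ with a₂ ∣ card (G⧸N), a₁ ∣ card N
  have hadvd : a ∣ Nat.card (G ⧸ N) * Nat.card N := by
    rw [← hcard, ← hab]; exact dvd_mul_right a b
  obtain ⟨a₂, a₁, ha₂, ha₁, haeq⟩ := exists_dvd_and_dvd_of_dvd_mul hadvd
  set b₁ := Nat.card N / a₁ with hb₁def
  set b₂ := Nat.card (G ⧸ N) / a₂ with hb₂def
  have ha₁pos : 0 < a₁ := Nat.pos_of_dvd_of_pos ha₁ hkpos
  have ha₂pos : 0 < a₂ := Nat.pos_of_dvd_of_pos ha₂ hqpos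
  have hk : a₁ * b₁ = Nat.card N := Nat.mul_div_cancel' ha₁
  have hq : a₂ * b₂ = Nat.card (G ⧸ N) := Nat.mul_div_cancel' ha₂
  have hb : b = b₁ * b₂ := by
    have h1 : a * b = a * (b₁ * b₂) := by
      rw [hab, hcard, ← hk, ← hq, haeq]; ring
    exact Nat.eq_of_mul_eq_mul_left (haeq ▸ Nat.mul_pos ha₂pos ha₁pos) h1
  obtain ⟨A₁, B₁, hA₁, hB₁, hfac₁⟩ := hN a₁ b₁ hk
  obtain ⟨A₂, B₂, hA₂, hB₂, hfac₂⟩ := hQ a₂ b₂ hq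
  -- lift sets to G
  let fA : (G ⧸ N) × N → G := fun p => p.1.out * (p.2 : G)
  let fB : N × (G ⧸ N) → G := fun p => (p.1 : G) * p.2.out
  have hmkout : ∀ q : G ⧸ N, QuotientGroup.mk q.out = q := fun q =>
    QuotientGroup.out_eq' q
  have hmkN : ∀ n : N, (QuotientGroup.mk (n : G) : G ⧸ N) = 1 := fun n =>
    (QuotientGroup.eq_one_iff _).2 n.2
  have hmkfA : ∀ p : (G ⧸ N) × N, (QuotientGroup.mk (fA p) : G ⧸ N) = p.1 := by
    intro p
    simp only [fA, QuotientGroup.mk_mul, hmkout, hmkN, mul_one]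
  have hmkfB : ∀ p : N × (G ⧸ N), (QuotientGroup.mk (fB p) : G ⧸ N) = p.2 := by
    intro p
    simp only [fB, QuotientGroup.mk_mul, hmkout, hmkN, one_mul]
  have hfAinj : Function.Injective fA := by
    rintro ⟨q, n⟩ ⟨q', n'⟩ h
    have hq : q = q' := by
      have e1 : (QuotientGroup.mk (fA (q, n)) : G ⧸ N) = q := hmkfA _
      have e2 : (QuotientGroup.mk (fA (q', n')) : G ⧸ N) = q' := hmkfA _
      rw [← e1, ← e2, h]
    subst hq
    have : (n : G) = (n' : G) := by
      have := h
      simp only [fA] at this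
      exact mul_left_cancel this
    exact Prod.ext rfl (Subtype.ext this)
  have hfBinj : Function.Injective fB := by
    rintro ⟨n, q⟩ ⟨n', q'⟩ h
    have hq : q = q' := by
      have e1 : (QuotientGroup.mk (fB (n, q)) : G ⧸ N) = q := hmkfB _
      have e2 : (QuotientGroup.mk (fB (n', q')) : G ⧸ N) = q' := hmkfB _
      rw [← e1, ← e2, h]
    subst hq
    have : (n : G) = (n' : G) := by
      have := h
      simp only [fB] at this
      exact mul_right_cancel this
    exact Prod.ext (Subtype.ext this) rfl
  refine ⟨(A₂ ×ˢ A₁).image fA, (B₁ ×ˢ B₂).image fB, ?_, ?_, ?_⟩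
  · rw [Finset.card_image_of_injective _ hfAinj, Finset.card_product, hA₂, hA₁,
      haeq, mul_comm]
  · rw [Finset.card_image_of_injective _ hfBinj, Finset.card_product, hB₁, hB₂, hb]
  · intro g
    obtain ⟨⟨u, v⟩, ⟨hu, hv, huv⟩, huniq⟩ := hfac₂ (QuotientGroup.mk g)
    have hnmem : u.out⁻¹ * g * v.out⁻¹ ∈ N := by
      rw [← QuotientGroup.eq_one_iff]
      simp only [QuotientGroup.mk_mul, QuotientGroup.mk_inv, hmkout]
      rw [show (QuotientGroup.mk g : G ⧸ N) = u * v from huv.symm]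
      group
    obtain ⟨⟨n₁, n₂⟩, ⟨h1, h2, h12⟩, huniqN⟩ := hfac₁ ⟨_, hnmem⟩
    have h12' : (n₁ : G) * (n₂ : G) = u.out⁻¹ * g * v.out⁻¹ :=
      congrArg Subtype.val h12
    refine ⟨(fA (u, n₁), fB (n₂, v)), ⟨?_, ?_, ?_⟩, ?_⟩
    · exact Finset.mem_image_of_mem fA (Finset.mem_product.2 ⟨hu, h1⟩)
    · exact Finset.mem_image_of_mem fB (Finset.mem_product.2 ⟨h2, hv⟩)
    · show u.out * (n₁ : G) * ((n₂ : G) * v.out) = g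
      calc u.out * (n₁ : G) * ((n₂ : G) * v.out)
          = u.out * ((n₁ : G) * (n₂ : G)) * v.out := by group
        _ = u.out * (u.out⁻¹ * g * v.out⁻¹) * v.out := by rw [h12']
        _ = g := by group
    · rintro ⟨x, y⟩ ⟨hx, hy, hxy⟩
      obtain ⟨⟨u', m₁⟩, hmem, rfl⟩ := Finset.mem_image.1 hx
      obtain ⟨⟨m₂, v'⟩, hmem', rfl⟩ := Finset.mem_image.1 hy
      obtain ⟨hu', hm₁⟩ := Finset.mem_product.1 hmem
      obtain ⟨hm₂, hv'⟩ := Finset.mem_product.1 hmem'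
      have hq : (u', v') = (u, v) := by
        apply huniq
        refine ⟨hu', hv', ?_⟩
        rw [← hxy]
        simp only [QuotientGroup.mk_mul, hmkfA (u', m₁), hmkfB (m₂, v')]
      have hu'' : u' = u := (Prod.ext_iff.1 hq).1
      have hv'' : v' = v := (Prod.ext_iff.1 hq).2
      rw [hu'', hv''] at hxy
      have hmn : (m₁, m₂) = (n₁, n₂) := by
        apply huniqN
        refine ⟨hm₁, hm₂, ?_⟩
        apply Subtype.ext
        show (m₁ : G) * (m₂ : G) = u.out⁻¹ * g * v.out⁻¹
        have : u.out * (m₁ : G) * ((m₂ : G) * v.out) = g := hxy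
        calc (m₁ : G) * (m₂ : G)
            = u.out⁻¹ * (u.out * (m₁ : G) * ((m₂ : G) * v.out)) * v.out⁻¹ := by group
          _ = u.out⁻¹ * g * v.out⁻¹ := by rw [this]
      have hm₁' : m₁ = n₁ := (Prod.ext_iff.1 hmn).1
      have hm₂' : m₂ = n₂ := (Prod.ext_iff.1 hmn).2
      rw [hu'', hv'', hm₁', hm₂']
end

section
/- Let H be a subgroup of a finite group G, and suppose H belongs to the class F (factorizable into two subsets for every factorization of its order). If a is a divisor of |G| that divides |H|, then G has a factorization G = AB into subsets with |A| = a and |B| = |G|/a. -/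
theorem isFactorization_iff_isComplement {G : Type*} [Group G] {A B : Finset G} :
    IsFactorization A B ↔ Subgroup.IsComplement (A : Set G) B := by
  rw [Subgroup.isComplement_iff_existsUnique]
  refine forall_congr' fun g => ?_
  constructor
  · rintro ⟨⟨a, b⟩, ⟨ha, hb, rfl⟩, huniq⟩
    refine ⟨(⟨a, ha⟩, ⟨b, hb⟩), rfl, fun ⟨⟨a', ha'⟩, ⟨b', hb'⟩⟩ h => ?_⟩
    simpa using huniq (a', b') ⟨ha', hb', h⟩
  · rintro ⟨⟨⟨a, ha⟩, ⟨b, hb⟩⟩, rfl, huniq⟩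
    refine ⟨(a, b), ⟨ha, hb, rfl⟩, fun ⟨a', b'⟩ ⟨ha', hb', h⟩ => ?_⟩
    simpa using huniq (⟨a', ha'⟩, ⟨b', hb'⟩) h

open scoped Pointwise

namespace Subgroup.IsComplement

variable {G : Type*} [Group G]

theorem injOn_mul {S T : Set G} (h : IsComplement S T) :
    Set.InjOn (fun p : G × G => p.1 * p.2) (S ×ˢ T) := by
  rintro ⟨s, t⟩ ⟨hs, ht⟩ ⟨s', t'⟩ ⟨hs', ht'⟩ heq
  simpa using h.1 (a₁ := (⟨s, hs⟩, ⟨t, ht⟩)) (a₂ := (⟨s', hs'⟩, ⟨t', ht'⟩)) heq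

theorem image_subtype_mul {H : Subgroup G} {A C : Set H} {T : Set G}
    (hAC : IsComplement A C) (hT : IsComplement (H : Set G) T) :
    IsComplement (Subtype.val '' A) (Subtype.val '' C * T) := by
  constructor
  · rintro ⟨⟨_, a, ha, rfl⟩, ⟨_, _, ⟨c, hc, rfl⟩, t, ht, rfl⟩⟩
      ⟨⟨_, a', ha', rfl⟩, ⟨_, _, ⟨c', hc', rfl⟩, t', ht', rfl⟩⟩ heq
    have hHT : ((a * c : H) : G) = (a' * c' : H) ∧ t = t' := by
      refine Prod.ext_iff.mp <|
        hT.injOn_mul (Set.mk_mem_prod (a * c).2 ht) (Set.mk_mem_prod (a' * c').2 ht') ?_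
      simpa [mul_assoc] using heq
    have hAC' : a = a' ∧ c = c' := by
      simpa using hAC.1 (a₁ := (⟨a, ha⟩, ⟨c, hc⟩)) (a₂ := (⟨a', ha'⟩, ⟨c', hc'⟩))
        (Subtype.ext hHT.1)
    obtain ⟨rfl, rfl⟩ := hAC'
    obtain rfl := hHT.2
    rfl
  · intro g
    obtain ⟨⟨⟨h, hh⟩, ⟨t, ht⟩⟩, rfl⟩ := hT.2 g
    obtain ⟨⟨⟨a, ha⟩, ⟨c, hc⟩⟩, hac⟩ := hAC.2 ⟨h, hh⟩
    refine ⟨(⟨a, a, ha, rfl⟩, ⟨c * t, Set.mul_mem_mul ⟨c, hc, rfl⟩ ht⟩), ?_⟩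
    simpa [← mul_assoc] using congrArg Subtype.val hac

end Subgroup.IsComplement

theorem factorization_of_divisor_of_subgroup_general {G : Type*} [Group G] [Fintype G]
    (H : Subgroup G) (hH : InF H) (a : ℕ)
    (haH : a ∣ Nat.card H) :
    ∃ A B : Finset G, A.card = a ∧ B.card = Nat.card G / a ∧
      IsFactorization A B := by
  classical
  obtain ⟨b, hb⟩ := haH
  obtain ⟨A, C, hA, hC, hAC⟩ := hH a b hb.symm
  obtain ⟨T, hT, -⟩ := H.exists_isComplement_right 1
  have hCT : ((C.map (Function.Embedding.subtype _) : Set G) ×ˢ T.toFinset).InjOn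
      fun p : G × G => p.1 * p.2 :=
    hT.injOn_mul.mono (Set.prod_mono (by simp +contextual [Set.subset_def]) (by simp))
  have ha : 0 < a := Nat.pos_of_mul_pos_right (hb ▸ Nat.card_pos)
  refine ⟨A.map (Function.Embedding.subtype _),
    C.map (Function.Embedding.subtype _) * T.toFinset, by simp [hA], ?_, ?_⟩
  · rw [Finset.card_mul_iff.mpr hCT, Finset.card_map, hC, Set.toFinset_card,
      ← Nat.card_eq_fintype_card, hT.card_right, ← H.card_mul_index, hb, mul_assoc,
      Nat.mul_div_cancel_left _ ha]
  · rw [isFactorization_iff_isComplement] at hAC ⊢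
    simpa [Finset.coe_mul] using hAC.image_subtype_mul hT

theorem factorization_of_divisor_of_subgroup {G : Type*} [Group G] [Fintype G]
    (H : Subgroup G) (hH : InF H) (a : ℕ) (ha : a ∣ Nat.card G)
    (haH : a ∣ Nat.card H) :
    ∃ A B : Finset G, A.card = a ∧ B.card = Nat.card G / a ∧
      IsFactorization A B :=
  factorization_of_divisor_of_subgroup_general H hH a haH
end

section
/- Every finite group G possessing a subnormal series 1 = G₀ < G₁ < … < G_t = G in which each index |G_i : G_{i-1}| is prime belongs to the class F: for every factorization |G| = a·b there exist subsets A, B of G with |A| = a, |B| = b, and G = AB. -/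
/-!
Induct along the series. If `K ≤ H` has prime index `p` and `a * b = |H|`, then `p` divides
`a` or `b`, say `a = p * a'`, and an exact factorization `A * B = K` with `|A| = a'` is lifted
to `(T * A) * B = H` for a left transversal `T` of `K` in `H`. Counting shows that all
products involved are exact: `|T * A * B| = |H| = |T| * |A| * |B|`.
-/

open Finset Pointwise

namespace Finset

variable {G : Type*} [Group G]

lemma card_eq_of_coe_eq {A : Finset G} {H : Subgroup G} (h : (A : Set G) = H) :
    #A = Nat.card H := by
  rw [← Nat.card_eq_finsetCard]
  exact congrArg (fun s : Set G ↦ Nat.card s) h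

variable [DecidableEq G] {A B C : Finset G}

lemma card_mul_eq_of_card_mul_mul_eq_left (hC : C.Nonempty)
    (h : #(A * B * C) = #A * #B * #C) : #(A * B) = #A * #B := by
  refine le_antisymm card_mul_le (Nat.le_of_mul_le_mul_right ?_ hC.card_pos)
  exact h ▸ card_mul_le

lemma card_mul_eq_of_card_mul_mul_eq_right (hA : A.Nonempty)
    (h : #(A * B * C) = #A * #B * #C) : #(B * C) = #B * #C := by
  rw [mul_assoc, mul_assoc] at h
  refine le_antisymm card_mul_le (Nat.le_of_mul_le_mul_left ?_ hA.card_pos)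
  exact h ▸ card_mul_le

end Finset

lemma isFactorization_of_mul_eq_univ {G : Type*} [Group G] [DecidableEq G] [Fintype G]
    {A B : Finset G} (h : A * B = univ) (hcard : #A * #B = Nat.card G) :
    IsFactorization A B := by
  have hinj : (A ×ˢ B : Set (G × G)).InjOn fun p ↦ p.1 * p.2 := by
    rw [← card_mul_iff, h, card_univ, hcard, Nat.card_eq_fintype_card]
  intro g
  obtain ⟨a, ha, b, hb, rfl⟩ := mem_mul.mp (h ▸ mem_univ g)
  exact ⟨(a, b), ⟨ha, hb, rfl⟩, fun p hp ↦ hinj ⟨hp.1, hp.2.1⟩ ⟨ha, hb⟩ hp.2.2⟩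

namespace Subgroup

variable {G : Type*} [Group G] {K H : Subgroup G}

lemma relIndex_mul_card (h : K ≤ H) : K.relIndex H * Nat.card K = Nat.card H := by
  rw [← Nat.card_congr (subgroupOfEquivOfLe h).toEquiv]
  exact (K.subgroupOf H).index_mul_card

variable [DecidableEq G]

/-- The class `F` for a subgroup, with the factor sets taken in the ambient group: since
`#A * #B = Nat.card K`, the equation `A * B = K` makes every element of `K` a unique product. -/
def InF (K : Subgroup G) : Prop :=
  ∀ a b : ℕ, a * b = Nat.card K →
    ∃ A B : Finset G, #A = a ∧ #B = b ∧ (↑(A * B) : Set G) = K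

lemma inF_bot : (⊥ : Subgroup G).InF := by
  intro a b hab
  rw [card_bot] at hab
  obtain ⟨rfl, rfl⟩ := _root_.mul_eq_one.mp hab
  exact ⟨{1}, {1}, card_singleton 1, card_singleton 1, by simp⟩

variable [Finite G] {A B : Finset G}

lemma exists_finset_mul_eq_of_le_left (hKH : K ≤ H) (hAB : (↑(A * B) : Set G) = K)
    (hcard : #A * #B = Nat.card K) :
    ∃ A' : Finset G, #A' = K.relIndex H * #A ∧ (↑(A' * B) : Set G) = H := by
  obtain ⟨S, hSK, hSH⟩ := exists_left_transversal_of_le hKH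
  set T := (Set.toFinite S).toFinset
  have hT : (T : Set G) = S := Set.Finite.coe_toFinset _
  have hTAB : (↑(T * A * B) : Set G) = H := by rw [mul_assoc, Finset.coe_mul, hAB, hT, hSK]
  have hTcard : #T = K.relIndex H := by
    refine Nat.eq_of_mul_eq_mul_right (Nat.card_pos (α := K)) ?_
    rw [relIndex_mul_card hKH, ← hSH, ← hT, coe_sort_coe, Nat.card_eq_finsetCard]
  have hB : B.Nonempty :=
    Nonempty.of_mul_right (s := A) ⟨1, by rw [← mem_coe, hAB]; exact K.one_mem⟩
  refine ⟨T * A, ?_, hTAB⟩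
  rw [← hTcard]
  refine card_mul_eq_of_card_mul_mul_eq_left hB ?_
  rw [card_eq_of_coe_eq hTAB, ← relIndex_mul_card hKH, hTcard, ← hcard, mul_assoc]

lemma exists_finset_mul_eq_of_le_right (hKH : K ≤ H) (hAB : (↑(A * B) : Set G) = K)
    (hcard : #A * #B = Nat.card K) :
    ∃ B' : Finset G, #B' = #B * K.relIndex H ∧ (↑(A * B') : Set G) = H := by
  obtain ⟨S, hKS, hSH⟩ := exists_right_transversal_of_le hKH
  set T := (Set.toFinite S).toFinset
  have hT : (T : Set G) = S := Set.Finite.coe_toFinset _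
  have hABT : (↑(A * B * T) : Set G) = H := by rw [Finset.coe_mul, hAB, hT, hKS]
  have hTcard : #T = K.relIndex H := by
    refine Nat.eq_of_mul_eq_mul_right (Nat.card_pos (α := K)) ?_
    rw [relIndex_mul_card hKH, ← hSH, ← hT, coe_sort_coe, Nat.card_eq_finsetCard, mul_comm]
  have hA : A.Nonempty :=
    Nonempty.of_mul_left (t := B) ⟨1, by rw [← mem_coe, hAB]; exact K.one_mem⟩
  refine ⟨B * T, ?_, by rwa [← mul_assoc]⟩
  rw [← hTcard]
  refine card_mul_eq_of_card_mul_mul_eq_right hA ?_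
  rw [card_eq_of_coe_eq hABT, ← relIndex_mul_card hKH, hTcard, ← hcard, mul_comm]

lemma InF.of_relIndex_prime (hK : K.InF) (hKH : K ≤ H) (hp : (K.relIndex H).Prime) :
    H.InF := by
  intro a b hab
  have hcard := relIndex_mul_card hKH
  have hdvd : K.relIndex H ∣ a * b := hab ▸ hcard ▸ dvd_mul_right _ _
  rcases hp.dvd_mul.mp hdvd with ⟨a', rfl⟩ | ⟨b', rfl⟩
  · have ha'b : a' * b = Nat.card K :=
      Nat.eq_of_mul_eq_mul_left hp.pos (by rw [hcard, ← hab, mul_assoc])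
    obtain ⟨A, B, rfl, rfl, hAB⟩ := hK a' b ha'b
    obtain ⟨A', hA', hA'B⟩ := exists_finset_mul_eq_of_le_left hKH hAB ha'b
    exact ⟨A', B, hA', rfl, hA'B⟩
  · have hab' : a * b' = Nat.card K :=
      Nat.eq_of_mul_eq_mul_left hp.pos (by rw [hcard, ← hab, mul_left_comm])
    obtain ⟨A, B, rfl, rfl, hAB⟩ := hK a b' hab'
    obtain ⟨B', hB', hAB'⟩ := exists_finset_mul_eq_of_le_right hKH hAB hab'
    exact ⟨A, B', rfl, hB'.trans (mul_comm _ _), hAB'⟩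

end Subgroup

lemma inF_of_inF_top {G : Type*} [Group G] [DecidableEq G] [Fintype G]
    (h : (⊤ : Subgroup G).InF) : InF G := by
  intro a b hab
  obtain ⟨A, B, rfl, rfl, hAB⟩ := h a b (by rwa [Subgroup.card_top])
  refine ⟨A, B, rfl, rfl, isFactorization_of_mul_eq_univ ?_ hab⟩
  rw [← coe_inj, hAB, Subgroup.coe_top, coe_univ]

theorem inF_of_prime_index_series {G : Type*} [Group G] [Fintype G] (t : ℕ)
    (s : Fin (t + 1) → Subgroup G) (h0 : s 0 = ⊥) (ht : s (Fin.last t) = ⊤)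
    (hle : ∀ i : Fin t, s i.castSucc ≤ s i.succ)
    (hprime : ∀ i : Fin t, ((s i.castSucc).relIndex (s i.succ)).Prime) :
    InF G := by
  classical
  have hseries : ∀ i, (s i).InF :=
    Fin.induction (h0 ▸ Subgroup.inF_bot) fun i hi ↦ hi.of_relIndex_prime (hle i) (hprime i)
  exact inF_of_inF_top (ht ▸ hseries (Fin.last t))
end

section
/- Every finite solvable group G belongs to the class F: for every factorization |G| = a·b there exist subsets A, B of G with |A| = a, |B| = b, and G = AB. -/
/-!
A nontrivial finite solvable group `G` has a subgroup `H` of prime index `p`: any maximal subgroup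
containing the commutator subgroup. Given `a * b = |G|`, the prime `p` divides `a` or `b`. If
`p ∣ a`, induction gives a factorization `A * B` of `H` with `|A| = a / p`, and `(S * A) * B` is
a factorization of `G` for any left transversal `S` of `H`. If `p ∣ b`, factor with the roles of
`a` and `b` swapped and invert: `G = A * B` uniquely iff `G = B⁻¹ * A⁻¹` uniquely.
-/

section

open Subgroup
open scoped Pointwise

variable {G : Type*} [Group G]

lemma Subgroup.IsComplement.isFactorization {A B : Finset G}
    (h : IsComplement (A : Set G) B) : IsFactorization A B := by
  intro g
  obtain ⟨⟨⟨a, ha⟩, ⟨b, hb⟩⟩, hab, huniq⟩ := h.existsUnique g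
  refine ⟨(a, b), ⟨ha, hb, hab⟩, ?_⟩
  rintro ⟨a', b'⟩ ⟨ha', hb', hab'⟩
  cases huniq (⟨a', ha'⟩, ⟨b', hb'⟩) hab'
  rfl

lemma inF_of_forall_exists_isComplement [Finite G]
    (h : ∀ a b, a * b = Nat.card G →
      ∃ S T : Set G, Nat.card S = a ∧ Nat.card T = b ∧ IsComplement S T) :
    InF G := by
  intro a b hab
  obtain ⟨S, T, rfl, rfl, hST⟩ := h a b hab
  refine ⟨S.toFinite.toFinset, T.toFinite.toFinset, ?_, ?_, ?_⟩
  · rw [← Set.ncard_eq_toFinset_card, Nat.card_coe_set_eq]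
  · rw [← Set.ncard_eq_toFinset_card, Nat.card_coe_set_eq]
  · exact IsComplement.isFactorization (by simpa using hST)

lemma Subgroup.IsComplement.inv {S T : Set G} (h : IsComplement S T) :
    IsComplement T⁻¹ S⁻¹ := by
  refine ⟨?_, fun g => ?_⟩
  · rintro ⟨⟨t, ht⟩, ⟨s, hs⟩⟩ ⟨⟨t', ht'⟩, ⟨s', hs'⟩⟩ heq
    have := @h.1 ⟨⟨s⁻¹, hs⟩, ⟨t⁻¹, ht⟩⟩ ⟨⟨s'⁻¹, hs'⟩, ⟨t'⁻¹, ht'⟩⟩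
      (by simpa [← mul_inv_rev, inv_inj] using heq)
    simp_all
  · obtain ⟨⟨⟨s, hs⟩, ⟨t, ht⟩⟩, hst⟩ := h.2 g⁻¹
    exact ⟨⟨⟨t⁻¹, by simpa⟩, ⟨s⁻¹, by simpa⟩⟩, by simp [← mul_inv_rev, hst]⟩

lemma Subgroup.IsComplement.mul_image_subtype {H : Subgroup G} {S : Set G} {A B : Set H}
    (hS : IsComplement S H) (hAB : IsComplement A B) :
    IsComplement (S * H.subtype '' A) (H.subtype '' B) := by
  refine ⟨?_, fun g => ?_⟩
  · rintro ⟨⟨-, s, hs, -, ⟨a, ha, rfl⟩, rfl⟩, ⟨-, b, hb, rfl⟩⟩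
      ⟨⟨-, s', hs', -, ⟨a', ha', rfl⟩, rfl⟩, ⟨-, b', hb', rfl⟩⟩ heq
    have hsab := @hS.1 ⟨⟨s, hs⟩, ⟨a * b, (a * b).2⟩⟩ ⟨⟨s', hs'⟩, ⟨a' * b', (a' * b').2⟩⟩
      (by simpa [mul_assoc] using heq)
    simp only [Prod.mk.injEq, Subtype.mk.injEq] at hsab
    obtain ⟨rfl, hab⟩ := hsab
    have := @hAB.1 ⟨⟨a, ha⟩, ⟨b, hb⟩⟩ ⟨⟨a', ha'⟩, ⟨b', hb'⟩⟩ (Subtype.ext hab)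
    simp_all
  · obtain ⟨⟨⟨s, hs⟩, ⟨h, hh⟩⟩, rfl⟩ := hS.2 g
    obtain ⟨⟨⟨a, ha⟩, ⟨b, hb⟩⟩, hab⟩ := hAB.2 ⟨h, hh⟩
    refine ⟨⟨⟨s * a, Set.mul_mem_mul hs ⟨a, ha, rfl⟩⟩, ⟨b, b, hb, rfl⟩⟩, ?_⟩
    have hab : (a : G) * b = h := congrArg Subtype.val hab
    simp [mul_assoc, hab]

lemma Subgroup.exists_isComplement_card_eq_index_mul [Finite G] (H : Subgroup G)
    {A B : Set H} (hAB : IsComplement A B) :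
    ∃ S T : Set G, Nat.card S = H.index * Nat.card A ∧ Nat.card T = Nat.card B ∧
      IsComplement S T := by
  obtain ⟨S, hS, -⟩ := H.exists_isComplement_left 1
  have hST := hS.mul_image_subtype hAB
  refine ⟨_, _, ?_, Nat.card_image_of_injective H.subtype_injective B, hST⟩
  have hB : Nat.card B ≠ 0 := Nat.card_ne_zero.2 ⟨hAB.nonempty_right.to_subtype, inferInstance⟩
  apply Nat.eq_of_mul_eq_mul_right (Nat.pos_of_ne_zero hB)
  calc _ = Nat.card G := by
        rw [← hST.card_mul_card, Nat.card_image_of_injective H.subtype_injective B]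
    _ = H.index * (Nat.card A * Nat.card B) := by
        rw [hAB.card_mul_card, ← H.card_mul_index, mul_comm]
    _ = _ := by ring

lemma prime_card_of_isSimpleOrder_subgroup [Finite G] [IsSimpleOrder (Subgroup G)] :
    (Nat.card G).Prime := by
  have : Nontrivial G := Subgroup.nontrivial_iff.mp inferInstance
  obtain ⟨p, hp, hpG⟩ := Nat.exists_prime_and_dvd (Finite.one_lt_card (α := G)).ne'
  have := Fact.mk hp
  obtain ⟨g, hg⟩ := exists_prime_orderOf_dvd_card' p hpG
  have hg1 : g ≠ 1 := fun h1 => hp.ne_one (by rw [← hg, h1, orderOf_one])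
  have := (eq_bot_or_eq_top (zpowers g)).resolve_left (zpowers_ne_bot.mpr hg1)
  rwa [← card_top (G := G), ← this, Nat.card_zpowers, hg]

lemma exists_index_prime_of_isSolvable [Finite G] [Nontrivial G] [Group.IsSolvable G] :
    ∃ H : Subgroup G, H.index.Prime := by
  obtain ⟨M, hM, hle⟩ := (eq_top_or_exists_le_coatom (commutator G)).resolve_left
    (Group.IsSolvable.commutator_lt_top_of_nontrivial G).ne
  have : M.Normal := .of_commutator_le G hle
  have : IsSimpleOrder (Subgroup (G ⧸ M)) :=
    OrderIso.isSimpleOrder_iff (β := Set.Ici M) (QuotientGroup.comapMk'OrderIso M) |>.mpr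
      (Set.isSimpleOrder_Ici_iff_isCoatom.mpr hM)
  exact ⟨M, prime_card_of_isSimpleOrder_subgroup⟩

theorem exists_isComplement_card_eq_of_isSolvable [Finite G] [Group.IsSolvable G] {a b : ℕ}
    (hab : a * b = Nat.card G) :
    ∃ S T : Set G, Nat.card S = a ∧ Nat.card T = b ∧ IsComplement S T := by
  induction hn : Nat.card G using Nat.strong_induction_on generalizing G a b with
  | _ n ih =>
  rcases subsingleton_or_nontrivial G with _ | _
  · obtain rfl : a = 1 := Nat.eq_one_of_mul_eq_one_right (by rw [hab, Nat.card_unique])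
    refine ⟨{1}, Set.univ, by simp, ?_, isComplement_singleton_univ⟩
    rw [Nat.card_univ, ← hab, one_mul]
  obtain ⟨H, hp⟩ := exists_index_prime_of_isSolvable (G := G)
  have hcard : Nat.card H * H.index = n := hn ▸ H.card_mul_index
  have lift {c d : ℕ} (hcd : c * d = Nat.card H) :
      ∃ S T : Set G, Nat.card S = H.index * c ∧ Nat.card T = d ∧ IsComplement S T := by
    have hlt : Nat.card H < n := by
      rw [← hcard]; exact lt_mul_of_one_lt_right Nat.card_pos hp.one_lt
    obtain ⟨A, B, rfl, rfl, hAB⟩ := ih _ hlt hcd rfl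
    exact H.exists_isComplement_card_eq_index_mul hAB
  rcases hp.dvd_mul.mp (hab ▸ H.index_dvd_card) with ⟨c, rfl⟩ | ⟨d, rfl⟩
  · refine lift (Nat.eq_of_mul_eq_mul_left hp.pos ?_)
    rw [← mul_assoc, hab, hn, ← hcard, mul_comm]
  · have hda : d * a = Nat.card H := by
      refine Nat.eq_of_mul_eq_mul_left hp.pos ?_
      rw [← mul_assoc, mul_comm _ a, hab, hn, ← hcard, mul_comm]
    obtain ⟨S, T, hS, hT, hST⟩ := lift hda
    exact ⟨T⁻¹, S⁻¹, by rwa [Set.natCard_inv], by rwa [Set.natCard_inv], hST.inv⟩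

end

theorem inF_of_solvable (G : Type*) [Group G] [Fintype G] [Group.IsSolvable G] :
    InF G :=
  inF_of_forall_exists_isComplement fun _ _ => exists_isComplement_card_eq_of_isSolvable
end

section
/- Let G be a finite group of minimal order not in class F, and let a be a divisor of |G| = n such that G has no factorization into subsets of sizes a and n/a. Then neither a nor n/a divides the order of any proper subgroup of G. -/
/-!
A proper subgroup `H` lies in `F` by minimality. If `a ∣ |H|`, a factorization `H = A B` with `|A| = a` extends
to `G = A (B T)` for a right transversal `T` of `H`, and `|B T| = |B| [G : H] = |G| / a`. The case
`|G| / a ∣ |H|` reduces to this one because `G = A B` factorizes uniquely iff `G = B⁻¹ A⁻¹` does.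
-/

open Pointwise

def HasFactorization (G : Type*) [Group G] (a b : ℕ) : Prop :=
  ∃ A B : Finset G, A.card = a ∧ B.card = b ∧ IsFactorization A B

variable {G : Type*} [Group G]

theorem IsFactorization.inv [DecidableEq G] {A B : Finset G} (h : IsFactorization A B) :
    IsFactorization B⁻¹ A⁻¹ := by
  intro g
  obtain ⟨⟨a, b⟩, ⟨ha, hb, hab⟩, huniq⟩ := h g⁻¹
  refine ⟨(b⁻¹, a⁻¹), ⟨by simpa, by simpa, by simp [← mul_inv_rev, hab]⟩, ?_⟩
  rintro ⟨x, y⟩ ⟨hx, hy, hxy⟩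
  obtain ⟨rfl, rfl⟩ := Prod.ext_iff.1 <|
    huniq (y⁻¹, x⁻¹) ⟨by simpa using hy, by simpa using hx, by simp [← mul_inv_rev, hxy]⟩
  simp

theorem HasFactorization.symm {a b : ℕ} (h : HasFactorization G a b) : HasFactorization G b a := by
  classical
  obtain ⟨A, B, hA, hB, hAB⟩ := h
  exact ⟨B⁻¹, A⁻¹, by rw [Finset.card_inv, hB], by rw [Finset.card_inv, hA], hAB.inv⟩

theorem IsFactorization.of_isComplement [DecidableEq G] {H : Subgroup G} {T : Set G} [Fintype T]
    (hT : Subgroup.IsComplement H T) {A B : Finset H} (hAB : IsFactorization A B) :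
    IsFactorization (A.image Subtype.val)
      ((B ×ˢ (Finset.univ : Finset T)).image fun p => (p.1 : G) * p.2) := by
  intro g
  obtain ⟨⟨h, t⟩, hht, huniq⟩ := hT.existsUnique g
  obtain ⟨⟨a, b⟩, ⟨ha, hb, hab⟩, huniq'⟩ := hAB h
  refine ⟨(a, b * t), ⟨Finset.mem_image_of_mem _ ha, Finset.mem_image.2 ⟨(b, t), by simpa, rfl⟩,
    by rw [← mul_assoc, ← hht, ← hab, Subgroup.coe_mul]⟩, ?_⟩
  rintro ⟨_, _⟩ ⟨hx, hy, hxy⟩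
  obtain ⟨a', ha', rfl⟩ := Finset.mem_image.1 hx
  obtain ⟨⟨b', t'⟩, hbt', rfl⟩ := Finset.mem_image.1 hy
  have h_eq : (a' * b', t') = (h, t) := huniq _ (by simpa [mul_assoc] using hxy)
  have hab_eq : (a', b') = (a, b) :=
    huniq' _ ⟨ha', (Finset.mem_product.1 hbt').1, (Prod.ext_iff.1 h_eq).1⟩
  obtain ⟨rfl, rfl⟩ := Prod.ext_iff.1 hab_eq
  obtain rfl : t' = t := (Prod.ext_iff.1 h_eq).2
  rfl

theorem HasFactorization.of_subgroup [Finite G] {H : Subgroup G} {a b : ℕ}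
    (h : HasFactorization H a b) : HasFactorization G a (b * H.index) := by
  classical
  obtain ⟨A, B, hA, hB, hAB⟩ := h
  obtain ⟨T, hT, -⟩ := H.exists_isComplement_right 1
  have : Fintype T := Fintype.ofFinite T
  have hinj : Function.Injective fun p : H × T => (p.1 : G) * p.2 := hT.1
  refine ⟨_, _, ?_, ?_, hAB.of_isComplement hT⟩
  · rw [Finset.card_image_of_injective _ Subtype.val_injective, hA]
  · rw [Finset.card_image_of_injective _ hinj, Finset.card_product, Finset.card_univ,
      ← Nat.card_eq_fintype_card, hT.card_right, hB]

theorem hasFactorization_of_dvd_card_subgroup [Finite G] {H : Subgroup G} (hH : InF H) {a : ℕ}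
    (ha : a ∣ Nat.card H) : HasFactorization G a (Nat.card G / a) := by
  have h := HasFactorization.of_subgroup (hH a (Nat.card H / a) (Nat.mul_div_cancel' ha))
  rwa [Nat.div_mul_right_comm ha, H.card_mul_index] at h

theorem minimal_counterexample_divisor_general (G : Type) [Group G] [Fintype G]
    (hmin : ∀ (H : Type) [Group H] [Fintype H],
      Nat.card H < Nat.card G → InF H)
    (a : ℕ) (ha : a ∣ Nat.card G)
    (hno : ¬ ∃ A B : Finset G, A.card = a ∧ B.card = Nat.card G / a ∧
      IsFactorization A B) :
    ∀ H : Subgroup G, H ≠ ⊤ →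
      ¬ a ∣ Nat.card H ∧ ¬ (Nat.card G / a) ∣ Nat.card H := by
  classical
  intro H hH
  have hF : InF H := hmin H (H.card_le_card_group.lt_of_ne (mt H.eq_top_of_card_eq hH))
  refine ⟨fun hdvd => hno (hasFactorization_of_dvd_card_subgroup hF hdvd), fun hdvd => hno ?_⟩
  have h := (hasFactorization_of_dvd_card_subgroup hF hdvd).symm
  rwa [Nat.div_div_self ha Nat.card_pos.ne'] at h

theorem minimal_counterexample_divisor (G : Type) [Group G] [Fintype G]
    (hG : ¬ InF G)
    (hmin : ∀ (H : Type) [Group H] [Fintype H],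
      Nat.card H < Nat.card G → InF H)
    (a : ℕ) (ha : a ∣ Nat.card G)
    (hno : ¬ ∃ A B : Finset G, A.card = a ∧ B.card = Nat.card G / a ∧
      IsFactorization A B) :
    ∀ H : Subgroup G, H ≠ ⊤ →
      ¬ a ∣ Nat.card H ∧ ¬ (Nat.card G / a) ∣ Nat.card H :=
  minimal_counterexample_divisor_general G hmin a ha hno
end

section
/- Let G be a finite group of order n = a·b, and let H, K be subgroups of coprime orders with |H| dividing a and |K| dividing b, say a = |H|·a₀ and b = |K|·b₀. Suppose there are subsets A₀, B₀ ⊆ G with |A₀| = a₀, |B₀| = b₀ such that the map A₀ × B₀ → G, (y,z) ↦ yz, is injective and A₀B₀ is a full set of representatives of the (H,K)-double cosets in G. Then A = HA₀ and B = B₀K satisfy |A| = a, |B| = b, and G = AB is a factorization of G into two subsets. -/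
open scoped Pointwise

theorem factorization_from_doset_reps {G : Type*} [Group G] [Fintype G]
    [DecidableEq G] (H K : Subgroup G)
    (hco : Nat.Coprime (Nat.card H) (Nat.card K))
    (a b a₀ b₀ : ℕ) (hn : Nat.card G = a * b)
    (ha : a = Nat.card H * a₀) (hb : b = Nat.card K * b₀)
    (A₀ B₀ : Finset G) (hA₀ : A₀.card = a₀) (hB₀ : B₀.card = b₀)
    (hinj : ∀ y ∈ A₀, ∀ z ∈ B₀, ∀ y' ∈ A₀, ∀ z' ∈ B₀,
      y * z = y' * z' → y = y' ∧ z = z')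
    (hreps : ∀ g : G, ∃! p : G × G, p.1 ∈ A₀ ∧ p.2 ∈ B₀ ∧
      ∃ h ∈ H, ∃ k ∈ K, h * (p.1 * p.2) * k = g) :
    ((H : Set G).toFinite.toFinset * A₀).card = a ∧
    (B₀ * (K : Set G).toFinite.toFinset).card = b ∧
    IsFactorization ((H : Set G).toFinite.toFinset * A₀) (B₀ * (K : Set G).toFinite.toFinset) := by
  classical
  set S : Finset G := (H : Set G).toFinite.toFinset with hS
  set T : Finset G := (K : Set G).toFinite.toFinset with hT
  have hmemS : ∀ x : G, x ∈ S ↔ x ∈ H := fun x => Set.Finite.mem_toFinset _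
  have hmemT : ∀ x : G, x ∈ T ↔ x ∈ K := fun x => Set.Finite.mem_toFinset _
  have hcardS : S.card = Nat.card H := by
    rw [hS, ← Set.ncard_eq_toFinset_card _ (H : Set G).toFinite, ← Nat.card_coe_set_eq]
    rfl
  have hcardT : T.card = Nat.card K := by
    rw [hT, ← Set.ncard_eq_toFinset_card _ (K : Set G).toFinite, ← Nat.card_coe_set_eq]
    rfl
  -- key uniqueness lemma
  have key : ∀ h ∈ H, ∀ y ∈ A₀, ∀ z ∈ B₀, ∀ k ∈ K,
      ∀ h' ∈ H, ∀ y' ∈ A₀, ∀ z' ∈ B₀, ∀ k' ∈ K,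
      h * (y * z) * k = h' * (y' * z') * k' →
      h = h' ∧ y = y' ∧ z = z' ∧ k = k' := by
    intro h hh y hy z hz k hk h' hh' y' hy' z' hz' k' hk' heq
    obtain ⟨p, -, hup⟩ := hreps (h * (y * z) * k)
    have e1 : (y, z) = p := hup (y, z) ⟨hy, hz, h, hh, k, hk, rfl⟩
    have e2 : (y', z') = p := hup (y', z') ⟨hy', hz', h', hh', k', hk', heq.symm⟩
    have e3 : (y, z) = ((y', z') : G × G) := e1.trans e2.symm
    have hyy : y = y' := congrArg Prod.fst e3
    have hzz : z = z' := congrArg Prod.snd e3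
    subst hyy; subst hzz
    set w := y * z with hw
    have hu : h'⁻¹ * h = w * (k' * k⁻¹) * w⁻¹ := by
      have h2 : h'⁻¹ * (h * w * k) * k⁻¹ = h'⁻¹ * (h' * w * k') * k⁻¹ := by rw [heq]
      calc h'⁻¹ * h = h'⁻¹ * (h * w * k) * k⁻¹ * w⁻¹ := by group
        _ = h'⁻¹ * (h' * w * k') * k⁻¹ * w⁻¹ := by rw [h2]
        _ = w * (k' * k⁻¹) * w⁻¹ := by group
    have hdH : orderOf (h'⁻¹ * h) ∣ Nat.card H :=
      H.orderOf_dvd_natCard (mul_mem (inv_mem hh') hh)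
    have hdK : orderOf (h'⁻¹ * h) ∣ Nat.card K := by
      have : orderOf (w * (k' * k⁻¹) * w⁻¹) = orderOf (k' * k⁻¹) :=
        (MulAut.conj w).orderOf_eq (k' * k⁻¹)
      rw [hu, this]
      exact K.orderOf_dvd_natCard (mul_mem hk' (inv_mem hk))
    have h1 : orderOf (h'⁻¹ * h) = 1 := by
      have := Nat.dvd_gcd hdH hdK
      rwa [Nat.Coprime.gcd_eq_one hco, Nat.dvd_one] at this
    have hone : h'⁻¹ * h = 1 := orderOf_eq_one_iff.mp h1
    have hhh : h = h' := by
      have := congrArg (h' * ·) hone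
      simpa [mul_assoc] using this
    subst hhh
    have hkk : k = k' := by
      have : h * w * k = h * w * k' := heq
      exact mul_left_cancel this
    exact ⟨rfl, rfl, rfl, hkk⟩
  -- nonemptiness
  have hGpos : 0 < Nat.card G := Nat.card_pos
  have hbpos : 0 < b₀ := by
    rcases Nat.eq_zero_or_pos b₀ with h0 | h
    · rw [hn, hb, h0] at hGpos; simp at hGpos
    · exact h
  have hapos : 0 < a₀ := by
    rcases Nat.eq_zero_or_pos a₀ with h0 | h
    · rw [hn, ha, h0] at hGpos; simp at hGpos
    · exact h
  obtain ⟨z₀, hz₀⟩ : B₀.Nonempty := Finset.card_pos.mp (hB₀ ▸ hbpos)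
  obtain ⟨y₀, hy₀⟩ : A₀.Nonempty := Finset.card_pos.mp (hA₀ ▸ hapos)
  -- card of A
  have cardA : (S * A₀).card = a := by
    rw [ha, ← hcardS, ← hA₀]
    rw [Finset.card_mul_iff]
    rintro ⟨h, y⟩ ⟨hh, hy⟩ ⟨h', y'⟩ ⟨hh', hy'⟩ (heq : h * y = h' * y')
    have : h * (y * z₀) * 1 = h' * (y' * z₀) * 1 := by
      simp only [mul_one, ← mul_assoc, heq]
    obtain ⟨e1, e2, -, -⟩ := key h ((hmemS h).mp hh) y hy z₀ hz₀ 1 (one_mem K)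
      h' ((hmemS h').mp hh') y' hy' z₀ hz₀ 1 (one_mem K) this
    simp [e1, e2]
  have cardB : (B₀ * T).card = b := by
    rw [hb, ← hcardT, ← hB₀, Nat.mul_comm]
    rw [Finset.card_mul_iff]
    rintro ⟨z, k⟩ ⟨hz, hk⟩ ⟨z', k'⟩ ⟨hz', hk'⟩ (heq : z * k = z' * k')
    have : 1 * (y₀ * z) * k = 1 * (y₀ * z') * k' := by
      simp only [one_mul, mul_assoc, heq]
    obtain ⟨-, -, e1, e2⟩ := key 1 (one_mem H) y₀ hy₀ z hz k ((hmemT k).mp hk)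
      1 (one_mem H) y₀ hy₀ z' hz' k' ((hmemT k').mp hk') this
    simp [e1, e2]
  refine ⟨cardA, cardB, ?_⟩
  intro g
  obtain ⟨⟨y, z⟩, ⟨hy, hz, h, hh, k, hk, hmul⟩, -⟩ := hreps g
  refine ⟨(h * y, z * k), ⟨?_, ?_, ?_⟩, ?_⟩
  · exact Finset.mul_mem_mul ((hmemS h).mpr hh) hy
  · exact Finset.mul_mem_mul hz ((hmemT k).mpr hk)
  · calc (h * y) * (z * k) = h * (y * z) * k := by group
      _ = g := hmul
  · rintro ⟨x, w⟩ ⟨hx, hwmem, hxw⟩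
    obtain ⟨h', hh', y', hy', rfl⟩ := Finset.mem_mul.mp hx
    obtain ⟨z', hz', k', hk', rfl⟩ := Finset.mem_mul.mp hwmem
    have heq : h' * (y' * z') * k' = h * (y * z) * k := by
      calc h' * (y' * z') * k' = (h' * y') * (z' * k') := by group
        _ = g := hxw
        _ = h * (y * z) * k := hmul.symm
    obtain ⟨e1, e2, e3, e4⟩ := key h' ((hmemS h').mp hh') y' hy' z' hz' k' ((hmemT k').mp hk')
      h hh y hy z hz k hk heq
    simp [e1, e2, e3, e4]
end

section
/- The group PSL₂(7) of order 168 belongs to the class F: for every factorization 168 = a·b there exist subsets A, B with |A| = a, |B| = b, and PSL₂(7) = AB. -/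
open scoped MatrixGroups

namespace PSLF

open scoped Pointwise

set_option maxRecDepth 40000

attribute [local instance 2000] List.decidableBAll

instance : DecidableEq (Matrix.SpecialLinearGroup (Fin 2) (ZMod 7)) :=
  fun a b => decidable_of_iff (a.1 = b.1) Subtype.ext_iff.symm

/-- swap a factorization by taking inverses -/
theorem inv_swap {G : Type*} [Group G] [DecidableEq G] {A B : Finset G}
    (h : IsFactorization A B) : IsFactorization B⁻¹ A⁻¹ := by
  intro g
  obtain ⟨p, ⟨ha, hb, hab⟩, hu⟩ := h g⁻¹
  refine ⟨(p.2⁻¹, p.1⁻¹), ⟨?_, ?_, ?_⟩, ?_⟩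
  · rw [Finset.mem_inv']; simpa using hb
  · rw [Finset.mem_inv']; simpa using ha
  · rw [← mul_inv_rev, hab, inv_inv]
  · rintro ⟨x, y⟩ ⟨hx, hy, hxy⟩
    have hx' : x⁻¹ ∈ B := Finset.mem_inv'.mp hx
    have hy' : y⁻¹ ∈ A := Finset.mem_inv'.mp hy
    have : (y⁻¹, x⁻¹) = p := hu (y⁻¹, x⁻¹) ⟨hy', hx', by rw [← mul_inv_rev, hxy]⟩
    have h1 : y⁻¹ = p.1 := by rw [← this]
    have h2 : x⁻¹ = p.2 := by rw [← this]
    have : x = p.2⁻¹ := by rw [← h2, inv_inv]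
    have : y = p.1⁻¹ := by rw [← h1, inv_inv]
    simp_all [Prod.ext_iff]

/-- any subgroup gives a factorization (index, card) via a transversal -/
theorem exists_fact_index_card {G : Type*} [Group G] [Finite G] (H : Subgroup G) :
    ∃ A B : Finset G, A.card = H.index ∧ B.card = Nat.card H ∧ IsFactorization A B := by
  classical
  cases nonempty_fintype G
  refine ⟨Finset.image (fun q : G ⧸ H => q.out) Finset.univ, (H : Set G).toFinset, ?_, ?_, ?_⟩
  · have h0 : (Finset.image (fun q : G ⧸ H => q.out) Finset.univ).card
        = Fintype.card (G ⧸ H) := by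
      rw [Finset.card_image_of_injective _
        (fun q q' hqq => Quotient.out_injective hqq : Function.Injective
          (fun q : G ⧸ H => q.out))]
      exact Finset.card_univ
    rw [h0, Subgroup.index, Nat.card_eq_fintype_card]
  · rw [Set.toFinset_card, ← Nat.card_eq_fintype_card, SetLike.coe_sort_coe]
  · intro g
    refine ⟨((g : G ⧸ H).out, (g : G ⧸ H).out⁻¹ * g), ⟨?_, ?_, ?_⟩, ?_⟩
    · exact Finset.mem_image.mpr ⟨(g : G ⧸ H), Finset.mem_univ _, rfl⟩
    · rw [Set.mem_toFinset]
      have h1 : ((g : G ⧸ H).out : G ⧸ H) = (g : G ⧸ H) := QuotientGroup.out_eq' _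
      exact (QuotientGroup.eq).mp h1
    · exact mul_inv_cancel_left _ _
    · rintro ⟨x, y⟩ ⟨hx, hy, hxy⟩
      obtain ⟨q, -, rfl⟩ := Finset.mem_image.mp hx
      have hy' : y ∈ H := Set.mem_toFinset.mp hy
      have h1 : ((q.out * y : G) : G ⧸ H) = (q.out : G ⧸ H) := by
        symm; rw [QuotientGroup.eq]; simpa using hy'
      have h2 : (g : G ⧸ H) = q := by rw [← hxy, h1, QuotientGroup.out_eq']
      have h3 : q.out = (g : G ⧸ H).out := by rw [h2]
      refine Prod.ext h3 ?_
      have : y = q.out⁻¹ * g := by rw [← hxy]; group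
      rw [this, h3]

abbrev SL7 := Matrix.SpecialLinearGroup (Fin 2) (ZMod 7)

abbrev V4 := ZMod 7 × ZMod 7 × ZMod 7 × ZMod 7

def vmul (x y : V4) : V4 :=
  (x.1 * y.1 + x.2.1 * y.2.2.1, x.1 * y.2.1 + x.2.1 * y.2.2.2,
   x.2.2.1 * y.1 + x.2.2.2 * y.2.2.1, x.2.2.1 * y.2.1 + x.2.2.2 * y.2.2.2)

def vinv (x : V4) : V4 := (x.2.2.2, -x.2.1, -x.2.2.1, x.1)

def f (A : SL7) : V4 := (A.1 0 0, A.1 0 1, A.1 1 0, A.1 1 1)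

theorem f_injective : Function.Injective f := by
  intro A B h
  rw [Prod.ext_iff, Prod.ext_iff, Prod.ext_iff] at h
  apply Subtype.ext
  ext i j
  fin_cases i <;> fin_cases j <;> simp only [f] at h <;> tauto

theorem f_mul (A B : SL7) : f (A * B) = vmul (f A) (f B) := by
  simp [f, vmul, Matrix.SpecialLinearGroup.coe_mul, Matrix.mul_apply, Fin.sum_univ_two]

theorem f_inv (A : SL7) : f A⁻¹ = vinv (f A) := by
  simp [f, vinv, Matrix.SpecialLinearGroup.coe_inv, Matrix.adjugate_fin_two]

theorem f_one : f 1 = (1, 0, 0, 1) := by decide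

/-- detect a subgroup of SL(2,7) from a closed list of 4-tuples -/
def listToSubgroup (L : List V4) (h1 : (1, 0, 0, 1) ∈ L)
    (hmul : ∀ x ∈ L, ∀ y ∈ L, vmul x y ∈ L) (hinv : ∀ x ∈ L, vinv x ∈ L) : Subgroup SL7 where
  carrier := {A | f A ∈ L}
  one_mem' := by show f 1 ∈ L; rw [f_one]; exact h1
  mul_mem' := by intro a b ha hb; show f (a * b) ∈ L; rw [f_mul]; exact hmul _ ha _ hb
  inv_mem' := by intro a ha; show f a⁻¹ ∈ L; rw [f_inv]; exact hinv _ ha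

def msl (a b c d : ZMod 7) (h : a * d - b * c = 1) : SL7 :=
  ⟨!![a, b; c, d], by rw [Matrix.det_fin_two_of]; exact h⟩

theorem card_listToSubgroup (L : List V4) (h1 : (1, 0, 0, 1) ∈ L)
    (hmul : ∀ x ∈ L, ∀ y ∈ L, vmul x y ∈ L) (hinv : ∀ x ∈ L, vinv x ∈ L)
    (hdet : ∀ x ∈ L, x.1 * x.2.2.2 - x.2.1 * x.2.2.1 = 1) :
    Nat.card (listToSubgroup L h1 hmul hinv) = L.toFinset.card := by
  classical
  have hsub : {x : V4 | x ∈ L} ⊆ Set.range f := by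
    intro x hx
    exact ⟨msl x.1 x.2.1 x.2.2.1 x.2.2.2 (hdet x hx), rfl⟩
  have hcar : ((listToSubgroup L h1 hmul hinv : Subgroup SL7) : Set SL7)
      = f ⁻¹' {x : V4 | x ∈ L} := rfl
  have himg : f '' (f ⁻¹' {x : V4 | x ∈ L}) = {x : V4 | x ∈ L} :=
    Set.image_preimage_eq_of_subset hsub
  have h2 : Nat.card (listToSubgroup L h1 hmul hinv) =
      (f ⁻¹' {x : V4 | x ∈ L}).ncard := by
    rw [← Nat.card_coe_set_eq, ← hcar]; rfl
  rw [h2, ← Set.ncard_image_of_injective _ f_injective, himg]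
  have : {x : V4 | x ∈ L} = (L.toFinset : Set V4) := by ext x; simp
  rw [this, Set.ncard_coe_finset]

def L12 : List V4 :=
  [(0,1,6,1), (0,6,1,6), (1,0,0,1), (1,3,4,6), (1,6,1,0), (3,1,4,4),
   (3,3,6,4), (4,4,1,3), (4,6,3,3), (6,0,0,6), (6,1,6,0), (6,4,3,1)]

def L24 : List V4 :=
  [(0,1,6,0), (0,2,3,1), (0,3,2,1), (0,4,5,6), (0,5,4,6), (0,6,1,0),
   (1,0,0,1), (1,4,5,0), (1,5,4,0), (2,0,1,4), (2,1,0,4), (2,3,3,5),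
   (3,0,1,5), (3,1,0,5), (3,5,5,4), (4,0,6,2), (4,2,2,3), (4,6,0,2),
   (5,0,6,3), (5,4,4,2), (5,6,0,3), (6,0,0,6), (6,2,3,0), (6,3,2,0)]

def H12 : Subgroup SL7 := listToSubgroup L12 (by decide) (by decide) (by decide)

def H24 : Subgroup SL7 := listToSubgroup L24 (by decide) (by decide) (by decide)

theorem card_H12 : Nat.card H12 = 12 := by
  rw [H12, card_listToSubgroup _ _ _ _ (by decide)]; decide

theorem card_H24 : Nat.card H24 = 24 := by
  rw [H24, card_listToSubgroup _ _ _ _ (by decide)]; decide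

theorem neg_one_mem_H12 : (-1 : SL7) ∈ H12 := by
  show f (-1) ∈ L12
  have : f (-1) = (6, 0, 0, 6) := by decide
  rw [this]; decide

theorem neg_one_mem_H24 : (-1 : SL7) ∈ H24 := by
  show f (-1) ∈ L24
  have : f (-1) = (6, 0, 0, 6) := by decide
  rw [this]; decide

theorem card_SL7 : Nat.card SL7 = 336 := by
  rw [Nat.card_eq_fintype_card]; decide

theorem center_eq : Subgroup.center SL7 = Subgroup.zpowers (-1 : SL7) := by
  have hc : (-1 : SL7) ∈ Subgroup.center SL7 := by
    rw [Matrix.SpecialLinearGroup.mem_center_iff]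
    refine ⟨-1, by decide, ?_⟩
    rw [Matrix.SpecialLinearGroup.coe_neg]
    decide
  ext A
  constructor
  · intro hA
    obtain ⟨r, hr, hrA⟩ := Matrix.SpecialLinearGroup.mem_center_iff.mp hA
    have hr' : r = 1 ∨ r = -1 := by
      have h2 : r ^ 2 = 1 := by simpa using hr
      have hall : ∀ s : ZMod 7, s ^ 2 = 1 → s = 1 ∨ s = -1 := by decide
      exact hall r h2
    rcases hr' with rfl | rfl
    · have : A = 1 := by
        apply Subtype.ext
        rw [← hrA, Matrix.SpecialLinearGroup.coe_one, map_one]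
      rw [this]; exact one_mem _
    · have : A = -1 := by
        apply Subtype.ext
        rw [← hrA, Matrix.SpecialLinearGroup.coe_neg, Matrix.SpecialLinearGroup.coe_one]
        decide
      rw [this]; exact Subgroup.mem_zpowers _
  · intro hA
    exact Subgroup.zpowers_le.mpr hc hA

theorem card_center : Nat.card (Subgroup.center SL7) = 2 := by
  rw [center_eq, Nat.card_zpowers]
  have h1 : (-1 : SL7) ^ 2 = 1 := by decide
  have h2 : (-1 : SL7) ≠ 1 := by decide
  exact orderOf_eq_prime h1 h2

theorem card_PSL : Nat.card PSL(2, ZMod 7) = 168 := by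
  have h3 := Subgroup.card_mul_index (Subgroup.center SL7)
  rw [card_center, card_SL7] at h3
  have : (Subgroup.center SL7).index = Nat.card PSL(2, ZMod 7) := rfl
  omega

/-- cardinality of the image of a subgroup under a hom whose kernel it contains -/
theorem card_map_of_ker_le {G G' : Type*} [Group G] [Group G'] [Finite G]
    (φ : G →* G') (H : Subgroup G) (hker : φ.ker ≤ H) :
    Nat.card (H.map φ) * Nat.card φ.ker = Nat.card H := by
  classical
  set ψ := φ.comp H.subtype with hψ
  have hrange : ψ.range = H.map φ := by
    rw [hψ, MonoidHom.range_comp, Subgroup.range_subtype]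
  have hkerψ : ψ.ker = φ.ker.subgroupOf H := by
    rw [hψ, ← MonoidHom.comap_ker]; rfl
  have e1 : Nat.card (H.map φ) = Nat.card (H ⧸ ψ.ker) := by
    rw [← hrange]
    exact (Nat.card_congr (QuotientGroup.quotientKerEquivRange ψ).toEquiv).symm
  have e2 : Nat.card ψ.ker = Nat.card φ.ker := by
    rw [hkerψ]
    exact Nat.card_congr (Subgroup.subgroupOfEquivOfLe hker).toEquiv
  rw [e1, ← e2]
  exact (Subgroup.card_eq_card_quotient_mul_card_subgroup ψ.ker).symm

def proj : SL7 →* PSL(2, ZMod 7) := QuotientGroup.mk' (Subgroup.center SL7)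

theorem card_map_half (H : Subgroup SL7) (hn : (-1 : SL7) ∈ H) (n : ℕ)
    (hH : Nat.card H = 2 * n) : Nat.card (H.map proj) = n := by
  have hker : proj.ker ≤ H := by
    rw [proj, QuotientGroup.ker_mk', center_eq]
    exact Subgroup.zpowers_le.mpr hn
  have := card_map_of_ker_le proj H hker
  rw [hH] at this
  have hk : Nat.card proj.ker = 2 := by
    rw [proj, QuotientGroup.ker_mk']; exact card_center
  rw [hk] at this
  omega

set_option maxHeartbeats 1000000 in
theorem exists_subgroup_of_card :
    ∀ d ∈ ({1, 2, 3, 4, 6, 7, 8, 12} : Finset ℕ),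
      ∃ H : Subgroup PSL(2, ZMod 7), Nat.card H = d := by
  haveI : Fact (Nat.Prime 2) := ⟨by norm_num⟩
  haveI : Fact (Nat.Prime 3) := ⟨by norm_num⟩
  haveI : Fact (Nat.Prime 7) := ⟨by norm_num⟩
  have hcard := card_PSL
  intro d hd
  fin_cases hd
  · exact ⟨⊥, Subgroup.card_bot⟩
  · simpa using Sylow.exists_subgroup_card_pow_prime (G := PSL(2, ZMod 7)) 2
      (n := 1) (by rw [hcard]; norm_num)
  · simpa using Sylow.exists_subgroup_card_pow_prime (G := PSL(2, ZMod 7)) 3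
      (n := 1) (by rw [hcard]; norm_num)
  · simpa using Sylow.exists_subgroup_card_pow_prime (G := PSL(2, ZMod 7)) 2
      (n := 2) (by rw [hcard]; norm_num)
  · exact ⟨H12.map proj, card_map_half H12 neg_one_mem_H12 6 card_H12⟩
  · simpa using Sylow.exists_subgroup_card_pow_prime (G := PSL(2, ZMod 7)) 7
      (n := 1) (by rw [hcard]; norm_num)
  · simpa using Sylow.exists_subgroup_card_pow_prime (G := PSL(2, ZMod 7)) 2
      (n := 3) (by rw [hcard]; norm_num)
  · exact ⟨H24.map proj, card_map_half H24 neg_one_mem_H24 12 card_H24⟩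

theorem pair_ba (H : Subgroup PSL(2, ZMod 7)) {a b : ℕ} (ha : Nat.card H = a)
    (hab : a * b = 168) :
    ∃ A B : Finset PSL(2, ZMod 7), A.card = b ∧ B.card = a ∧ IsFactorization A B := by
  obtain ⟨A, B, h1, h2, h3⟩ := exists_fact_index_card H
  have hmul := Subgroup.card_mul_index H
  rw [ha, card_PSL] at hmul
  have ha0 : a ≠ 0 := by rintro rfl; simp at hab
  have hidx : H.index = b := by
    have : a * H.index = a * b := by rw [hmul, hab]
    exact Nat.eq_of_mul_eq_mul_left (Nat.pos_of_ne_zero ha0) this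
  exact ⟨A, B, h1.trans hidx, h2.trans ha, h3⟩

theorem pair_ab (H : Subgroup PSL(2, ZMod 7)) {a b : ℕ} (ha : Nat.card H = a)
    (hab : a * b = 168) :
    ∃ A B : Finset PSL(2, ZMod 7), A.card = a ∧ B.card = b ∧ IsFactorization A B := by
  classical
  obtain ⟨A, B, h1, h2, h3⟩ := pair_ba H ha (by rw [← hab])
  exact ⟨B⁻¹, A⁻¹, by rw [Finset.card_inv, h2], by rw [Finset.card_inv, h1], inv_swap h3⟩

end PSLF

set_option maxHeartbeats 1000000 in
set_option maxRecDepth 40000 in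
theorem psl_2_7_inF :
    ∀ a b : ℕ, a * b = 168 →
      ∃ A B : Finset PSL(2, ZMod 7), A.card = a ∧ B.card = b ∧
        IsFactorization A B := by
  intro a b hab
  have hdvd : a ∣ 168 := ⟨b, hab.symm⟩
  have ha : a ∈ Nat.divisors 168 := Nat.mem_divisors.mpr ⟨hdvd, by norm_num⟩
  have hdiv : Nat.divisors 168 =
      {1, 2, 3, 4, 6, 7, 8, 12, 14, 21, 24, 28, 42, 56, 84, 168} := by decide
  rw [hdiv] at ha
  have small : ∀ d ∈ ({1, 2, 3, 4, 6, 7, 8, 12} : Finset ℕ),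
      ∃ H : Subgroup PSL(2, ZMod 7), Nat.card H = d := PSLF.exists_subgroup_of_card
  fin_cases ha
  · obtain ⟨H, hH⟩ := small 1 (by decide); exact PSLF.pair_ab H hH hab
  · obtain ⟨H, hH⟩ := small 2 (by decide); exact PSLF.pair_ab H hH hab
  · obtain ⟨H, hH⟩ := small 3 (by decide); exact PSLF.pair_ab H hH hab
  · obtain ⟨H, hH⟩ := small 4 (by decide); exact PSLF.pair_ab H hH hab
  · obtain ⟨H, hH⟩ := small 6 (by decide); exact PSLF.pair_ab H hH hab
  · obtain ⟨H, hH⟩ := small 7 (by decide); exact PSLF.pair_ab H hH hab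
  · obtain ⟨H, hH⟩ := small 8 (by decide); exact PSLF.pair_ab H hH hab
  · obtain ⟨H, hH⟩ := small 12 (by decide); exact PSLF.pair_ab H hH hab
  · obtain rfl : b = 12 := by omega
    obtain ⟨H, hH⟩ := small 12 (by decide); exact PSLF.pair_ba H hH (by omega)
  · obtain rfl : b = 8 := by omega
    obtain ⟨H, hH⟩ := small 8 (by decide); exact PSLF.pair_ba H hH (by omega)
  · obtain rfl : b = 7 := by omega
    obtain ⟨H, hH⟩ := small 7 (by decide); exact PSLF.pair_ba H hH (by omega)
  · obtain rfl : b = 6 := by omega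
    obtain ⟨H, hH⟩ := small 6 (by decide); exact PSLF.pair_ba H hH (by omega)
  · obtain rfl : b = 4 := by omega
    obtain ⟨H, hH⟩ := small 4 (by decide); exact PSLF.pair_ba H hH (by omega)
  · obtain rfl : b = 3 := by omega
    obtain ⟨H, hH⟩ := small 3 (by decide); exact PSLF.pair_ba H hH (by omega)
  · obtain rfl : b = 2 := by omega
    obtain ⟨H, hH⟩ := small 2 (by decide); exact PSLF.pair_ba H hH (by omega)
  · obtain rfl : b = 1 := by omega
    obtain ⟨H, hH⟩ := small 1 (by decide); exact PSLF.pair_ba H hH (by omega)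
end

section
/- There exist subsets A, B of the group SL₂(8) with |A| = 21 and |B| = 24 such that every element of SL₂(8) has a unique representation as a product a·b with a ∈ A, b ∈ B. -/
/-!
Let `H` be the diagonal torus and `K` the upper unitriangular group of `SL₂(𝔽_q)`. Right
multiplication by `K` fixes the first column `(a, c)` of `g`, and a first column determines `g`
up to `K`; left multiplication by `diag(t, t⁻¹)` moves it freely to `(t a, t⁻¹ c)`. Hence the
double coset `H g K` consists of `q (q - 1)` distinct elements `h g k` and is determined by `a c`,
or by `c = 0`. If the products `a b` with `a ∈ A₀`, `b ∈ B₀` meet each of the `q + 1` double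
cosets exactly once, then `A = H A₀` and `B = B₀ K` factorize the group. For `q = 8` this works
with `|A₀| = |B₀| = 3`, giving `|A| = 7 · 3` and `|B| = 3 · 8`.
-/

open Matrix Finset
open scoped MatrixGroups Pointwise

theorem IsFactorization.map {G H : Type*} [Group G] [Group H] (e : G ≃* H) {A B : Finset G}
    (h : IsFactorization A B) :
    IsFactorization (A.map e.toEquiv.toEmbedding) (B.map e.toEquiv.toEmbedding) := by
  intro g
  obtain ⟨⟨a, b⟩, ⟨ha, hb, hab⟩, huniq⟩ := h (e.symm g)
  refine ⟨(e a, e b), ⟨mem_map_of_mem _ ha, mem_map_of_mem _ hb, ?_⟩, ?_⟩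
  · rw [← map_mul, hab, MulEquiv.apply_symm_apply]
  rintro ⟨_, _⟩ ⟨hx, hy, hxy⟩
  obtain ⟨a', ha', rfl⟩ := mem_map.1 hx
  obtain ⟨b', hb', rfl⟩ := mem_map.1 hy
  obtain ⟨rfl, rfl⟩ := Prod.ext_iff.1 <|
    huniq (a', b') ⟨ha', hb', by simp [← hxy, ← map_mul]⟩
  rfl

def Matrix.SpecialLinearGroup.mapEquiv {n R S : Type*} [Fintype n] [DecidableEq n] [CommRing R]
    [CommRing S] (e : R ≃+* S) : SpecialLinearGroup n R ≃* SpecialLinearGroup n S :=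
  MonoidHom.toMulEquiv (map e.toRingHom) (map e.symm.toRingHom) (by ext; simp) (by ext; simp)

namespace SL2

variable {F : Type*} [Field F]

def diag (t : Fˣ) : SL(2, F) := ⟨!![(t : F), 0; 0, (t : F)⁻¹], by simp⟩

def upper (x : F) : SL(2, F) := ⟨!![1, x; 0, 1], by simp⟩

def lower (x : F) : SL(2, F) := ⟨!![1, 0; x, 1], by simp⟩

theorem upper_zero : upper (0 : F) = 1 := by
  ext i j; fin_cases i <;> fin_cases j <;> rfl

theorem upper_injective : Function.Injective (upper : F → SL(2, F)) := fun x y h => by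
  simpa [upper] using congrArg (fun g : SL(2, F) => g 0 1) h

theorem diag_injective : Function.Injective (diag : Fˣ → SL(2, F)) := fun s t h => by
  ext; simpa [diag] using congrArg (fun g : SL(2, F) => g 0 0) h

theorem coe_diag_mul_mul_upper (t : Fˣ) (g : SL(2, F)) (x : F) :
    ((diag t * g * upper x : SL(2, F)) : Matrix (Fin 2) (Fin 2) F) =
      !![t * g 0 0, t * (g 0 0 * x + g 0 1);
        (t : F)⁻¹ * g 1 0, (t : F)⁻¹ * (g 1 0 * x + g 1 1)] := by
  simp only [Matrix.SpecialLinearGroup.coe_mul]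
  rw [Matrix.eta_fin_two (g : Matrix _ _ F)]
  simp [diag, upper, mul_add, mul_assoc]

theorem coe_mul_upper (g : SL(2, F)) (x : F) :
    ((g * upper x : SL(2, F)) : Matrix (Fin 2) (Fin 2) F) =
      !![g 0 0, g 0 0 * x + g 0 1; g 1 0, g 1 0 * x + g 1 1] := by
  simp only [Matrix.SpecialLinearGroup.coe_mul]
  rw [Matrix.eta_fin_two (g : Matrix _ _ F)]
  simp [upper]

theorem firstColumn_ne_zero (g : SL(2, F)) : g 0 0 ≠ 0 ∨ g 1 0 ≠ 0 := by
  by_contra! h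
  have := g.det_coe
  rw [Matrix.det_fin_two, h.1, h.2] at this
  simp at this

theorem eq_and_eq_of_diag_mul_mul_upper_eq {s t : Fˣ} {g : SL(2, F)} {x y : F}
    (h : diag s * g * upper x = diag t * g * upper y) : s = t ∧ x = y := by
  have h := congrArg (fun g : SL(2, F) => (g : Matrix (Fin 2) (Fin 2) F)) h
  simp only [coe_diag_mul_mul_upper] at h
  have h00 := congrFun₂ h 0 0
  have h01 := congrFun₂ h 0 1
  have h10 := congrFun₂ h 1 0
  have h11 := congrFun₂ h 1 1
  simp only [of_apply, cons_val', cons_val_zero, cons_val_one, empty_val', cons_val_fin_one,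
    mul_eq_mul_right_iff, _root_.inv_inj, Units.val_inj] at h00 h01 h10 h11
  have hcol := firstColumn_ne_zero g
  obtain rfl : s = t := by tauto
  simp only [mul_right_inj' (Units.ne_zero s), mul_right_inj' (inv_ne_zero (Units.ne_zero s)),
    add_left_inj, mul_eq_mul_left_iff] at h01 h11
  tauto

theorem exists_mul_upper_eq_of_firstColumn_eq {g g' : SL(2, F)} (h0 : g 0 0 = g' 0 0)
    (h1 : g 1 0 = g' 1 0) : ∃ x, g * upper x = g' := by
  have hdet := g.det_coe
  have hdet' := g'.det_coe
  rw [Matrix.det_fin_two, h0, h1] at hdet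
  rw [Matrix.det_fin_two] at hdet'
  -- `x` is the `(0, 1)` entry of `g⁻¹ g'`
  refine ⟨g 1 1 * g' 0 1 - g 0 1 * g' 1 1, Subtype.ext ?_⟩
  rw [coe_mul_upper]
  ext i j
  fin_cases i <;> fin_cases j <;> simp only [h0, h1] <;> simp
  · linear_combination g' 0 1 * hdet - g 0 1 * hdet'
  · linear_combination g' 1 1 * hdet - g 1 1 * hdet'

variable [DecidableEq F]

def doubleCosetKey (g : SL(2, F)) : Option F := if g 1 0 = 0 then none else some (g 0 0 * g 1 0)

theorem doubleCosetKey_diag_mul_mul_upper (t : Fˣ) (g : SL(2, F)) (x : F) :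
    doubleCosetKey (diag t * g * upper x) = doubleCosetKey g := by
  have h := congrFun₂ (coe_diag_mul_mul_upper t g x)
  simp [doubleCosetKey, h, mul_mul_mul_comm (t : F)]

theorem exists_diag_firstColumn_eq_of_doubleCosetKey_eq {g g' : SL(2, F)}
    (h : doubleCosetKey g = doubleCosetKey g') :
    ∃ t : Fˣ, t * g 0 0 = g' 0 0 ∧ (t : F)⁻¹ * g 1 0 = g' 1 0 := by
  unfold doubleCosetKey at h
  split_ifs at h with hc hc' hc'
  · have h0 : g 0 0 ≠ 0 := (firstColumn_ne_zero g).resolve_right (not_not.2 hc)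
    have h0' : g' 0 0 ≠ 0 := (firstColumn_ne_zero g').resolve_right (not_not.2 hc')
    exact ⟨Units.mk0 (g' 0 0 / g 0 0) (div_ne_zero h0' h0), by simp [h0], by simp [hc, hc']⟩
  · have h' := Option.some_injective _ h
    refine ⟨Units.mk0 (g 1 0 / g' 1 0) (div_ne_zero hc hc'), ?_, ?_⟩
    · simp only [Units.val_mk0]
      field_simp
      linear_combination h'
    · simp only [Units.val_mk0]
      field_simp

theorem exists_diag_mul_mul_upper_of_doubleCosetKey_eq {g g' : SL(2, F)}
    (h : doubleCosetKey g = doubleCosetKey g') : ∃ (t : Fˣ) (x : F), diag t * g * upper x = g' := by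
  obtain ⟨t, h0, h1⟩ := exists_diag_firstColumn_eq_of_doubleCosetKey_eq h
  have hcol := congrFun₂ (coe_diag_mul_mul_upper t g 0)
  rw [upper_zero, mul_one] at hcol
  obtain ⟨x, hx⟩ := exists_mul_upper_eq_of_firstColumn_eq (g := diag t * g) (g' := g')
    (by simpa [h0] using hcol 0 0) (by simpa [h1] using hcol 1 0)
  exact ⟨t, x, hx⟩

theorem eq_of_diag_mul_mul_mul_upper_eq {A₀ B₀ : Finset SL(2, F)}
    (hinj : Set.InjOn (fun p : SL(2, F) × SL(2, F) => doubleCosetKey (p.1 * p.2)) ↑(A₀ ×ˢ B₀))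
    {s t : Fˣ} {a a' b b' : SL(2, F)} {x y : F}
    (ha : a ∈ A₀) (ha' : a' ∈ A₀) (hb : b ∈ B₀) (hb' : b' ∈ B₀)
    (h : diag s * a * (b * upper x) = diag t * a' * (b' * upper y)) :
    s = t ∧ a = a' ∧ b = b' ∧ x = y := by
  replace h : diag s * (a * b) * upper x = diag t * (a' * b') * upper y := by
    simpa only [mul_assoc] using h
  have hkey := congrArg doubleCosetKey h
  rw [doubleCosetKey_diag_mul_mul_upper, doubleCosetKey_diag_mul_mul_upper] at hkey
  obtain ⟨rfl, rfl⟩ := Prod.ext_iff.1 <| hinj (x₁ := (a, b)) (x₂ := (a', b'))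
    (mem_coe.2 (mem_product.2 ⟨ha, hb⟩)) (mem_coe.2 (mem_product.2 ⟨ha', hb'⟩)) hkey
  obtain ⟨rfl, rfl⟩ := eq_and_eq_of_diag_mul_mul_upper_eq h
  exact ⟨rfl, rfl, rfl, rfl⟩

variable [Fintype F]

variable (F) in
def torus : Finset SL(2, F) := univ.map ⟨diag, diag_injective⟩

variable (F) in
def upperUnipotent : Finset SL(2, F) := univ.map ⟨upper, upper_injective⟩

section

variable {A₀ B₀ : Finset SL(2, F)}
  (hAB : Set.BijOn (fun p : SL(2, F) × SL(2, F) => doubleCosetKey (p.1 * p.2)) ↑(A₀ ×ˢ B₀) .univ)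
include hAB

theorem isFactorization_torus_mul_mul_upperUnipotent :
    IsFactorization (torus F * A₀) (B₀ * upperUnipotent F) := by
  intro g
  obtain ⟨⟨a, b⟩, hab, hkey⟩ := hAB.surjOn (Set.mem_univ (doubleCosetKey g))
  obtain ⟨ha, hb⟩ := mem_product.1 hab
  obtain ⟨t, x, rfl⟩ := exists_diag_mul_mul_upper_of_doubleCosetKey_eq (g := a * b) hkey
  refine ⟨(diag t * a, b * upper x), ⟨mul_mem_mul (mem_map_of_mem _ (mem_univ t)) ha,
    mul_mem_mul hb (mem_map_of_mem _ (mem_univ x)), by simp only [mul_assoc]⟩, ?_⟩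
  rintro ⟨_, _⟩ ⟨hp₁, hp₂, hp⟩
  obtain ⟨_, hs, a', ha', rfl⟩ := mem_mul.1 hp₁
  obtain ⟨s, -, rfl⟩ := mem_map.1 hs
  obtain ⟨b', hb', _, hy, rfl⟩ := mem_mul.1 hp₂
  obtain ⟨y, -, rfl⟩ := mem_map.1 hy
  simp only [Function.Embedding.coeFn_mk] at hp ⊢
  obtain ⟨rfl, rfl, rfl, rfl⟩ := eq_of_diag_mul_mul_mul_upper_eq hAB.injOn ha' ha hb' hb
    (s := s) (t := t) (x := y) (y := x) (by rw [hp]; simp only [mul_assoc])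
  rfl

theorem card_torus_mul : #(torus F * A₀) = (Fintype.card F - 1) * #A₀ := by
  obtain ⟨⟨_, b⟩, hab, -⟩ := hAB.surjOn (Set.mem_univ none)
  rw [card_mul_iff.2, torus, card_map, card_univ, Fintype.card_units]
  rintro ⟨_, a⟩ hp ⟨_, a'⟩ hp' h
  obtain ⟨hs, ha⟩ := hp
  obtain ⟨ht, ha'⟩ := hp'
  obtain ⟨s, -, rfl⟩ := mem_map.1 hs
  obtain ⟨t, -, rfl⟩ := mem_map.1 ht
  obtain ⟨rfl, rfl, -⟩ := eq_of_diag_mul_mul_mul_upper_eq hAB.injOn ha ha' (mem_product.1 hab).2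
    (mem_product.1 hab).2 (x := 0) (y := 0)
    (by simp only [← mul_assoc]; exact congrArg (· * _ * _) h)
  rfl

theorem card_mul_upperUnipotent : #(B₀ * upperUnipotent F) = #B₀ * Fintype.card F := by
  obtain ⟨⟨a, _⟩, hab, -⟩ := hAB.surjOn (Set.mem_univ none)
  rw [card_mul_iff.2, upperUnipotent, card_map, card_univ]
  rintro ⟨b, _⟩ hp ⟨b', _⟩ hp' h
  obtain ⟨hb, hx⟩ := hp
  obtain ⟨hb', hy⟩ := hp'
  obtain ⟨x, -, rfl⟩ := mem_map.1 hx
  obtain ⟨y, -, rfl⟩ := mem_map.1 hy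
  obtain ⟨-, -, rfl, rfl⟩ := eq_of_diag_mul_mul_mul_upper_eq hAB.injOn (mem_product.1 hab).1
    (mem_product.1 hab).1 hb hb' (s := 1) (t := 1) (congrArg (_ * ·) h)
  rfl

end

end SL2

set_option maxRecDepth 10000

/-- `𝔽₈ = 𝔽₂[α]/(α³ + α + 1)`, with `b₀ + b₁ α + b₂ α²` stored as the number with binary digits
`b₂ b₁ b₀`; addition is `xor`, and `mulBits` multiplies without carries and then reduces by
`α⁴ = α² + α` and `α³ = α + 1`. -/
def F8 : Type := Fin 8

namespace F8

instance : DecidableEq F8 := inferInstanceAs (DecidableEq (Fin 8))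
instance : Fintype F8 := inferInstanceAs (Fintype (Fin 8))

def mulBits (a b : ℕ) : ℕ :=
  let p := (if b.testBit 0 then a else 0) ^^^ (if b.testBit 1 then a <<< 1 else 0) ^^^
    (if b.testBit 2 then a <<< 2 else 0)
  let p := if p.testBit 4 then p ^^^ 0b10110 else p
  if p.testBit 3 then p ^^^ 0b1011 else p

instance : Zero F8 := ⟨(0 : Fin 8)⟩
instance : One F8 := ⟨(1 : Fin 8)⟩
instance : Add F8 := ⟨fun a b => Fin.ofNat 8 (Fin.val a ^^^ Fin.val b)⟩
instance : Neg F8 := ⟨id⟩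
instance : Mul F8 := ⟨fun a b => Fin.ofNat 8 (mulBits (Fin.val a) (Fin.val b))⟩

instance : CommRing F8 where
  add_assoc := by decide
  zero_add := by decide
  add_zero := by decide
  add_comm := by decide
  neg_add_cancel := by decide
  left_distrib := by decide
  right_distrib := by decide
  zero_mul := by decide
  mul_zero := by decide
  mul_assoc := by decide
  one_mul := by decide
  mul_one := by decide
  mul_comm := by decide
  nsmul := nsmulRec
  zsmul := zsmulRec
  npow := npowRec

instance : Field F8 where
  inv a := a ^ 6
  exists_pair_ne := ⟨0, 1, by decide⟩
  mul_inv_cancel := by decide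
  inv_zero := by decide
  nnqsmul := _
  qsmul := _

def α : F8 := Fin.ofNat 8 2

noncomputable def ringEquivGaloisField : F8 ≃+* GaloisField 2 3 :=
  haveI := Fintype.ofFinite (GaloisField 2 3)
  FiniteField.ringEquivOfCardEq <| by
    rw [Fintype.card_eq_nat_card (α := GaloisField 2 3), GaloisField.card 2 3 (by norm_num)]; rfl

end F8

open SL2 F8

def A₀ : Finset SL(2, F8) := {1, lower (α ^ 6), ⟨!![0, 1; 1, α ^ 5], by decide⟩}

def B₀ : Finset SL(2, F8) := {1, lower 1, lower α}

theorem bijOn_doubleCosetKey_A₀_B₀ :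
    Set.BijOn (fun p : SL(2, F8) × SL(2, F8) => doubleCosetKey (p.1 * p.2)) ↑(A₀ ×ˢ B₀) .univ := by
  have himage : (A₀ ×ˢ B₀).image (fun p => doubleCosetKey (p.1 * p.2)) = univ := by decide
  refine ⟨Set.mapsTo_univ _ _, card_image_iff.1 ?_, ?_⟩
  · rw [himage]; decide
  · intro κ _
    rw [← coe_image, himage]
    exact mem_coe.2 (mem_univ κ)

theorem sl_2_8_factorization_21_24 :
    ∃ A B : Finset (Matrix.SpecialLinearGroup (Fin 2) (GaloisField 2 3)),
      A.card = 21 ∧ B.card = 24 ∧ IsFactorization A B := by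
  let e := (SpecialLinearGroup.mapEquiv (n := Fin 2) ringEquivGaloisField).toEquiv.toEmbedding
  refine ⟨(torus F8 * A₀).map e, (B₀ * upperUnipotent F8).map e, ?_, ?_,
    (isFactorization_torus_mul_mul_upperUnipotent bijOn_doubleCosetKey_A₀_B₀).map _⟩
  · rw [card_map, card_torus_mul bijOn_doubleCosetKey_A₀_B₀]; decide
  · rw [card_map, card_mul_upperUnipotent bijOn_doubleCosetKey_A₀_B₀]; decide
end
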